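/- Suppose α ∈ M^G − N^G for closed λ-terms M, N and a graph model G. Then there exists a finite subpair A ≤ G such that for all partial pairs B with A ≤ B ≤ G, α ∈ M^{E_B} − N^{E_B}, where E_B is the completion of B. -/

import Mathlib

/-- Untyped λ-terms in de Bruijn notation. -/
inductive Term : Type
  | var : ℕ → Term
  | app : Term → Term → Term
  | lam : Term → Term
  deriving DecidableEq

namespace Term

/-- Lifting (shifting) of de Bruijn indices at cutoff `d`. -/
def lift (d : ℕ) : Term → Term
  | var n => if n < d then var n else var (n + 1)
  | app M N => app (lift d M) (lift d N)
  | lam M => lam (lift (d + 1) M)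

/-- Capture-avoiding substitution of `s` for index `k`. -/
def subst : Term → ℕ → Term → Term
  | var n, k, s => if n = k then s else if k < n then var (n - 1) else var n
  | app M N, k, s => app (subst M k s) (subst N k s)
  | lam M, k, s => lam (subst M (k + 1) (lift 0 s))

/-- One-step β-reduction (compatible closure of the β-rule). -/
inductive Step : Term → Term → Prop
  | beta (M N : Term) : Step (app (lam M) N) (subst M 0 N)
  | appL {M M' : Term} (N : Term) : Step M M' → Step (app M N) (app M' N)
  | appR (M : Term) {N N' : Term} : Step N N' → Step (app M N) (app M N')
  | xi {M M' : Term} : Step M M' → Step (lam M) (lam M')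

/-- β-conversion: the equivalence relation generated by one-step β-reduction. -/
def BetaConv : Term → Term → Prop := Relation.EqvGen Step

/-- An effective bijective numeration of λ-terms. -/
def encodeT : Term → ℕ
  | var n => 3 * n
  | app M N => 3 * Nat.pair (encodeT M) (encodeT N) + 1
  | lam M => 3 * encodeT M + 2

/-- `ClosedUnder k M`: all free de Bruijn indices of `M` are `< k`. -/
def ClosedUnder : ℕ → Term → Prop
  | k, var n => n < k
  | k, app M N => ClosedUnder k M ∧ ClosedUnder k N
  | k, lam M => ClosedUnder (k + 1) M

/-- Closed λ-terms. -/
def Closed (M : Term) : Prop := ClosedUnder 0 M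

end Term

/-- A set of λ-terms is recursively enumerable (w.r.t. the fixed effective
numeration `encodeT`) if membership is the domain of a partial recursive function. -/
def TermRE (X : Set Term) : Prop :=
  ∃ f : ℕ →. ℕ, Nat.Partrec f ∧ ∀ M : Term, M ∈ X ↔ (f (Term.encodeT M)).Dom

/-- A set of λ-terms closed under β-conversion. -/
def BetaClosed (X : Set Term) : Prop :=
  ∀ M N : Term, M ∈ X → Term.BetaConv M N → N ∈ X

/-- Extend an environment by pushing a new value for de Bruijn index `0`. -/
def consEnv {G : Type*} (d : Set G) (ρ : ℕ → Set G) : ℕ → Set G :=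
  fun k => match k with
  | 0 => d
  | k + 1 => ρ k

/-- Interpretation of λ-terms in a graph model `(G, c)`, where `c : G* × G → G`
is the (injective, total) code map and environments send variables to subsets of `G`. -/
def ginterp {G : Type*} (c : Finset G × G → G) : Term → (ℕ → Set G) → Set G
  | Term.var n, ρ => ρ n
  | Term.app M N, ρ =>
      {α | ∃ a : Finset G, ↑a ⊆ ginterp c N ρ ∧ c (a, α) ∈ ginterp c M ρ}
  | Term.lam M, ρ =>
      {β | ∃ (a : Finset G) (α : G), β = c (a, α) ∧ α ∈ ginterp c M (consEnv ↑a ρ)}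

/-- The λ-term `δ = λx.xx`. -/
def deltaTerm : Term := Term.lam (Term.app (Term.var 0) (Term.var 0))

/-- The λ-term `Ω = (λx.xx)(λx.xx)`. -/
def omegaTerm : Term := Term.app deltaTerm deltaTerm

/-- A partial pair on an ambient set of "web elements" `G`: a carrier set `A ⊆ G`
together with a partial code map `c_A : A* × A ⇀ A` (represented by `Option`). -/
structure PartialPair (G : Type*) where
  carrier : Set G
  code : Finset G × G → Option G

namespace PartialPair

/-- Well-formedness of a partial pair: the domain and values of the partial code
map lie in the carrier, and the code map is injective (where defined). -/
def Good {G : Type*} (P : PartialPair G) : Prop :=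
  (∀ (a : Finset G) (α γ : G), P.code (a, α) = some γ →
      ↑a ⊆ P.carrier ∧ α ∈ P.carrier ∧ γ ∈ P.carrier) ∧
  (∀ (p q : Finset G × G) (γ : G), P.code p = some γ → P.code q = some γ → p = q)

/-- `P.Sub Q`: `P` is a subpair of `Q` (`P ≤ Q`): the carrier of `P` is contained in
that of `Q` and the code map of `Q` extends that of `P`. -/
def Sub {G : Type*} (P Q : PartialPair G) : Prop :=
  P.carrier ⊆ Q.carrier ∧
  ∀ (p : Finset G × G) (γ : G), P.code p = some γ → Q.code p = some γ

/-- Interpretation of λ-terms in a partial pair, using only the defined part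
of the partial code map. -/
def interp {G : Type*} (P : PartialPair G) : Term → (ℕ → Set G) → Set G
  | Term.var n, ρ => ρ n
  | Term.app M N, ρ =>
      {α | α ∈ P.carrier ∧ ∃ a : Finset G, ↑a ⊆ interp P N ρ ∧
        ∃ γ : G, P.code (a, α) = some γ ∧ γ ∈ interp P M ρ}
  | Term.lam M, ρ =>
      {β | ∃ (a : Finset G) (α : G), P.code (a, α) = some β ∧
        α ∈ interp P M (consEnv ↑a ρ)}

end PartialPair

/-- The total pair associated to a graph model `(G, c)` (carrier is all of `G`). -/
def fullPair {G : Type*} (c : Finset G × G → G) : PartialPair G :=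
  ⟨Set.univ, fun p => some (c p)⟩

/-- The bottom environment, mapping every variable to `∅`. -/
def botEnv {G : Type*} : ℕ → Set G := fun _ => ∅

/-- The ambient universe for the completion of a partial pair on `G`: formal
elements that are either elements of `G` or formal pairs `(a, α)` (with the
finite set `a` represented by a list). -/
inductive Pre (G : Type*) : Type _
  | base : G → Pre G
  | node : List (Pre G) → Pre G → Pre G

noncomputable instance {G : Type*} : DecidableEq (Pre G) := Classical.decEq _

/-- `DomCond P s α`: the formal pair `(s, α)` comes from a pair in the domain of
the partial code map of `P`. -/
def DomCond {G : Type*} (P : PartialPair G) (s : Finset (Pre G)) (α : Pre G) : Prop :=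
  ∃ (s₀ : Finset G) (α₀ γ : G),
    s = s₀.image Pre.base ∧ α = Pre.base α₀ ∧ P.code (s₀, α₀) = some γ

open Classical in
/-- The total code map of the completion: it extends `c_A` (via the embedding
`Pre.base`) and sends each pair outside `dom(c_A)` to the formal pair itself. -/
noncomputable def compCode {G : Type*} (P : PartialPair G) :
    Finset (Pre G) × Pre G → Pre G := fun p =>
  if h : DomCond P p.1 p.2 then Pre.base h.choose_spec.choose_spec.choose
  else Pre.node p.1.toList p.2

/-- The stages `Eₙ` of the completion: `E₀ = A` and
`E_{n+1} = Eₙ ∪ ((Eₙ* × Eₙ) − dom(c_A))`. -/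
def compStage {G : Type*} (P : PartialPair G) : ℕ → Set (Pre G)
  | 0 => Pre.base '' P.carrier
  | n + 1 => compStage P n ∪
      {x | ∃ (s : Finset (Pre G)) (α : Pre G), ↑s ⊆ compStage P n ∧
        α ∈ compStage P n ∧ ¬ DomCond P s α ∧ x = Pre.node s.toList α}

/-- The carrier `E_A = ⋃ₙ Eₙ` of the completion. -/
def compCarrier {G : Type*} (P : PartialPair G) : Set (Pre G) :=
  ⋃ n, compStage P n

open Classical in
/-- The completion of a partial pair `P`, as a (total on its carrier) pair. -/
noncomputable def compPair {G : Type*} (P : PartialPair G) : PartialPair (Pre G) :=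
  ⟨compCarrier P, fun p =>
    if ↑p.1 ⊆ compCarrier P ∧ p.2 ∈ compCarrier P then some (compCode P p) else none⟩


section AuxSep

variable {G : Type*}

lemma Pre.base_injective : Function.Injective (Pre.base : G → Pre G) := by
  intro a b h; cases h; rfl

/-- Monotonicity of interpretation along the subpair relation. -/
lemma interp_mono {P Q : PartialPair G} (h : P.Sub Q) :
    ∀ (t : Term) (ρ σ : ℕ → Set G), (∀ n, ρ n ⊆ σ n) → P.interp t ρ ⊆ Q.interp t σ := by
  intro t
  induction t with
  | var n =>
    intro ρ σ hρ x hx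
    exact hρ n hx
  | app M N ihM ihN =>
    intro ρ σ hρ x hx
    obtain ⟨hxc, a, ha, γ, hcode, hγ⟩ := hx
    exact ⟨h.1 hxc, a, fun y hy => ihN ρ σ hρ (ha hy), γ, h.2 _ _ hcode, ihM ρ σ hρ hγ⟩
  | lam M ih =>
    intro ρ σ hρ x hx
    obtain ⟨a, α, hcode, hα⟩ := hx
    refine ⟨a, α, h.2 _ _ hcode, ih _ _ ?_ hα⟩
    intro n
    cases n with
    | zero => exact fun y hy => hy
    | succ k => exact hρ k

open Classical in
/-- The subpair of a graph model obtained by restricting to a set `S`. -/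
noncomputable def restrictPair (c : Finset G × G → G) (S : Set G) : PartialPair G :=
  ⟨S, fun p => if ↑p.1 ⊆ S ∧ p.2 ∈ S ∧ c p ∈ S then some (c p) else none⟩

lemma restrict_sub_full (c : Finset G × G → G) (S : Set G) :
    (restrictPair c S).Sub (fullPair c) := by
  refine ⟨Set.subset_univ _, fun p γ hp => ?_⟩
  simp only [restrictPair] at hp
  split at hp
  · simpa [fullPair] using hp
  · exact absurd hp (by simp)

lemma restrict_mono (c : Finset G × G → G) {S T : Set G} (hST : S ⊆ T) :
    (restrictPair c S).Sub (restrictPair c T) := by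
  refine ⟨hST, fun p γ hp => ?_⟩
  simp only [restrictPair] at hp ⊢
  split at hp
  · rename_i hcond
    rw [if_pos ⟨fun y hy => hST (hcond.1 hy), hST hcond.2.1, hST hcond.2.2⟩]
    exact hp
  · exact absurd hp (by simp)

/-- Every membership in the full interpretation is witnessed by a finite restriction. -/
lemma exists_finite_witness (c : Finset G × G → G) :
    ∀ (t : Term) (ρ : ℕ → Set G) (x : G), x ∈ (fullPair c).interp t ρ →
      ∃ S : Set G, S.Finite ∧ x ∈ (restrictPair c S).interp t ρ := by
  intro t
  induction t with
  | var n =>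
    intro ρ x hx
    exact ⟨∅, Set.finite_empty, hx⟩
  | app M N ihM ihN =>
    intro ρ x hx
    obtain ⟨-, a, ha, γ, hcode, hγ⟩ := hx
    have hcγ : c (a, x) = γ := by
      simpa [fullPair] using hcode
    obtain ⟨SM, hSMfin, hSM⟩ := ihM ρ γ hγ
    have hchoice : ∀ β : G, ∃ S : Set G, S.Finite ∧
        (β ∈ a → β ∈ (restrictPair c S).interp N ρ) := by
      intro β
      by_cases h : β ∈ a
      · obtain ⟨S, h1, h2⟩ := ihN ρ β (ha h)
        exact ⟨S, h1, fun _ => h2⟩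
      · exact ⟨∅, Set.finite_empty, fun h' => absurd h' h⟩
    choose F hF1 hF2 using hchoice
    set T : Set G := ⋃ β ∈ (↑a : Set G), F β with hT
    have hTfin : T.Finite := Set.Finite.biUnion a.finite_toSet (fun β _ => hF1 β)
    refine ⟨SM ∪ T ∪ ↑a ∪ {x, γ},
      ((hSMfin.union hTfin).union a.finite_toSet).union ((Set.finite_singleton γ).insert x), ?_⟩
    set S : Set G := SM ∪ T ∪ ↑a ∪ {x, γ}
    have hSMS : SM ⊆ S := fun y hy => Or.inl (Or.inl (Or.inl hy))
    have haS : (↑a : Set G) ⊆ S := fun y hy => Or.inl (Or.inr hy)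
    have hxS : x ∈ S := Or.inr (Or.inl rfl)
    have hγS : γ ∈ S := Or.inr (Or.inr rfl)
    refine ⟨hxS, a, ?_, γ, ?_, ?_⟩
    · intro β hβ
      refine interp_mono (restrict_mono c ?_) N ρ ρ (fun n => le_refl _) (hF2 β hβ)
      intro y hy
      exact Or.inl (Or.inl (Or.inr (Set.mem_biUnion (Finset.mem_coe.2 hβ) hy)))
    · simp only [restrictPair]
      rw [if_pos ⟨haS, hxS, by simpa [hcγ] using hγS⟩]
      simp [hcγ]
    · exact interp_mono (restrict_mono c hSMS) M ρ ρ (fun n => le_refl _) hSM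
  | lam M ih =>
    intro ρ x hx
    obtain ⟨a, α, hcode, hα⟩ := hx
    have hcx : c (a, α) = x := by simpa [fullPair] using hcode
    obtain ⟨S0, hS0fin, hS0⟩ := ih _ α hα
    refine ⟨S0 ∪ ↑a ∪ {α, x}, (hS0fin.union a.finite_toSet).union
      ((Set.finite_singleton x).insert α), ?_⟩
    set S : Set G := S0 ∪ ↑a ∪ {α, x}
    have hS0S : S0 ⊆ S := fun y hy => Or.inl (Or.inl hy)
    have haS : (↑a : Set G) ⊆ S := fun y hy => Or.inl (Or.inr hy)
    have hαS : α ∈ S := Or.inr (Or.inl rfl)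
    have hxS : x ∈ S := Or.inr (Or.inr rfl)
    refine ⟨a, α, ?_, ?_⟩
    · simp only [restrictPair]
      rw [if_pos ⟨haS, hαS, by simpa [hcx] using hxS⟩]
      simp [hcx]
    · exact interp_mono (restrict_mono c hS0S) M _ _ (fun n => le_refl _) hS0

/-- Transporting membership along a map of (partial) pairs. -/
lemma interp_map {H : Type*} [DecidableEq H] {P : PartialPair G} {Q : PartialPair H} (g : G → H)
    (hcar : ∀ x ∈ P.carrier, g x ∈ Q.carrier)
    (hcode : ∀ (s : Finset G) (β γ : G), P.code (s, β) = some γ →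
      Q.code (s.image g, g β) = some (g γ)) :
    ∀ (t : Term) (ρ : ℕ → Set G) (x : G), x ∈ P.interp t ρ →
      g x ∈ Q.interp t (fun n => g '' ρ n) := by
  intro t
  induction t with
  | var n =>
    intro ρ x hx
    exact ⟨x, hx, rfl⟩
  | app M N ihM ihN =>
    intro ρ x hx
    obtain ⟨hxc, a, ha, γ, hc, hγ⟩ := hx
    refine ⟨hcar x hxc, a.image g, ?_, g γ, hcode a x γ hc, ihM ρ γ hγ⟩
    intro y hy
    rw [Finset.coe_image] at hy
    obtain ⟨z, hz, rfl⟩ := hy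
    exact ihN ρ z (ha hz)
  | lam M ih =>
    intro ρ x hx
    obtain ⟨a, α, hc, hα⟩ := hx
    refine ⟨a.image g, g α, hcode a α x hc, ?_⟩
    have := ih (consEnv ↑a ρ) α hα
    have henv : (fun n => g '' consEnv (↑a) ρ n) =
        consEnv (↑(a.image g)) (fun n => g '' ρ n) := by
      funext n
      cases n with
      | zero => simp [consEnv, Finset.coe_image]
      | succ k => rfl
    rwa [henv] at this

open Classical in
noncomputable def collapse (c : Finset G × G → G) : Pre G → G
  | .base g => g
  | .node l β => c ((l.attach.map (fun x => collapse c x.1)).toFinset, collapse c β)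
decreasing_by
  · have := List.sizeOf_lt_of_mem x.2
    simp only [Pre.node.sizeOf_spec]
    omega
  · simp only [Pre.node.sizeOf_spec]; omega

open Classical in
lemma collapse_node (c : Finset G × G → G) (l : List (Pre G)) (β : Pre G) :
    collapse c (.node l β) = c ((l.map (collapse c)).toFinset, collapse c β) := by
  rw [collapse]
  congr 2
  simp [List.attach_map_val]

@[simp] lemma collapse_base (c : Finset G × G → G) (x : G) :
    collapse c (.base x) = x := by rw [collapse]

open Classical in
lemma toFinset_toList_map {H : Type*} (f : Pre G → H) (s : Finset (Pre G)) :
    (s.toList.map f).toFinset = s.image f := by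
  ext y
  simp [List.mem_toFinset, List.mem_map, Finset.mem_image]

lemma mem_compCarrier_base {B : PartialPair G} {x : G} (hx : x ∈ B.carrier) :
    Pre.base x ∈ compCarrier B :=
  Set.mem_iUnion.2 ⟨0, ⟨x, hx, rfl⟩⟩

lemma compCode_spec {B : PartialPair G} {s : Finset (Pre G)} {α : Pre G}
    (hd : DomCond B s α) :
    ∃ (s₁ : Finset G) (α₁ γ₁ : G), s = s₁.image Pre.base ∧ α = Pre.base α₁ ∧
      B.code (s₁, α₁) = some γ₁ ∧ compCode B (s, α) = Pre.base γ₁ := by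
  obtain ⟨h1, h2, h3⟩ := hd.choose_spec.choose_spec.choose_spec
  exact ⟨_, _, _, h1, h2, h3, by unfold compCode; rw [dif_pos hd]⟩

/-- The completion code extends the code of `B` along `Pre.base`. -/
lemma base_code {B : PartialPair G} (hB : B.Good) (s : Finset G) (β γ : G)
    (h : B.code (s, β) = some γ) :
    (compPair B).code (s.image Pre.base, Pre.base β) = some (Pre.base γ) := by
  obtain ⟨hsub, hβ, hγ⟩ := hB.1 s β γ h
  have hcond : ↑(s.image Pre.base) ⊆ compCarrier B ∧ Pre.base β ∈ compCarrier B := by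
    constructor
    · intro y hy
      rw [Finset.coe_image] at hy
      obtain ⟨z, hz, rfl⟩ := hy
      exact mem_compCarrier_base (hsub hz)
    · exact mem_compCarrier_base hβ
  have hd : DomCond B (s.image Pre.base) (Pre.base β) := ⟨s, β, γ, rfl, rfl, h⟩
  obtain ⟨s₁, α₁, γ₁, h1, h2, h3, hcc⟩ := compCode_spec hd
  have hs : s₁ = s := Finset.image_injective Pre.base_injective h1.symm
  have hα : α₁ = β := Pre.base_injective h2.symm
  subst hs hα
  rw [h] at h3
  rw [Option.some.injEq] at h3
  simp only [compPair]
  rw [if_pos hcond, hcc, h3]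

open Classical in
/-- The collapse map is a morphism from the completion to the full pair. -/
lemma collapse_code (c : Finset G × G → G) {B : PartialPair G}
    (hBfull : B.Sub (fullPair c)) (s : Finset (Pre G)) (β γ : Pre G)
    (h : (compPair B).code (s, β) = some γ) :
    (fullPair c).code (s.image (collapse c), collapse c β) = some (collapse c γ) := by
  simp only [compPair] at h
  split at h
  swap
  · exact absurd h (by simp)
  rw [Option.some.injEq] at h
  subst h
  simp only [fullPair, Option.some.injEq]
  by_cases hd : DomCond B s β
  · obtain ⟨s₁, α₁, γ₁, h1, h2, h3, hcc⟩ := compCode_spec hd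
    have hcγ := hBfull.2 _ _ h3
    simp only [fullPair, Option.some.injEq] at hcγ
    have himg : Finset.image (collapse c) (Finset.image Pre.base s₁) = s₁ := by
      rw [Finset.image_image]
      ext y
      simp [Function.comp]
    rw [hcc, collapse_base, h1, h2, himg, collapse_base]
    exact hcγ
  · rw [show compCode B (s, β) = Pre.node s.toList β from by
      unfold compCode; rw [dif_neg hd]]
    rw [collapse_node, toFinset_toList_map]

end AuxSep

/-- **Separation via completions.** If `α ∈ M^G − N^G` for closed `M, N` in a graph
model `G`, then there is a finite subpair `A ≤ G` such that for every partial pair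
`B` with `A ≤ B ≤ G`, we have `α ∈ M^{E_B} − N^{E_B}` in the completion `E_B`. -/
theorem separating_finite_subpair_completion {G : Type*} [Infinite G]
    (c : Finset G × G → G) (hc : Function.Injective c)
    (M N : Term) (hM : Term.Closed M) (hN : Term.Closed N) (α : G)
    (hmem : α ∈ (fullPair c).interp M botEnv)
    (hnmem : α ∉ (fullPair c).interp N botEnv) :
    ∃ A : PartialPair G, A.carrier.Finite ∧ A.Sub (fullPair c) ∧
      ∀ B : PartialPair G, B.Good → A.Sub B → B.Sub (fullPair c) →
        Pre.base α ∈ (compPair B).interp M botEnv ∧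
        Pre.base α ∉ (compPair B).interp N botEnv := by
  classical
  obtain ⟨S, hSfin, hS⟩ := exists_finite_witness c M botEnv α hmem
  refine ⟨restrictPair c S, hSfin, restrict_sub_full c S, ?_⟩
  intro B hB hAB hBfull
  constructor
  · have hαB : α ∈ B.interp M botEnv := interp_mono hAB M _ _ (fun n => le_refl _) hS
    have hmap := interp_map (P := B) (Q := compPair B) Pre.base
      (fun x hx => mem_compCarrier_base hx)
      (fun s β γ h => base_code hB s β γ h) M botEnv α hαB
    have henv : (fun n => Pre.base '' botEnv n) = (botEnv : ℕ → Set (Pre G)) := by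
      funext n; simp [botEnv]
    rwa [henv] at hmap
  · intro hcontra
    have hmap := interp_map (P := compPair B) (Q := fullPair c) (collapse c)
      (fun x _ => Set.mem_univ _)
      (fun s β γ h => collapse_code c hBfull s β γ h) N botEnv (Pre.base α) hcontra
    have henv : (fun n => collapse c '' botEnv n) = (botEnv : ℕ → Set G) := by
      funext n; simp [botEnv]
    rw [collapse_base, henv] at hmap
    exact hnmem hmap
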